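/- Let H, G be locally compact groups, Y ∈ Ω₀(H) a nonempty element of the open coset ring of H, and α : Aff(Y) → G an affine map such that the restriction α|_Y is proper. Then α is proper on Aff(Y). -/

import Mathlib

/-- An open coset of a topological group. -/
def IsOpenCoset {H : Type*} [Group H] [TopologicalSpace H] (S : Set H) : Prop :=
  ∃ (K : Subgroup H) (x : H), IsOpen (K : Set H) ∧ S = (fun h => x * h) '' (K : Set H)

/-- `S` is an open subcoset of infinite index in the open coset `Y`. -/
def IsOpenSubcosetInfIndex {H : Type*} [Group H] [TopologicalSpace H]
    (S Y : Set H) : Prop :=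
  ∃ (K L : Subgroup H) (y x : H), IsOpen (K : Set H) ∧ IsOpen (L : Set H) ∧
    Y = (fun h => y * h) '' (K : Set H) ∧ S = (fun h => x * h) '' (L : Set H) ∧
    S ⊆ Y ∧ (L.subgroupOf K).index = 0

/-!
Write `Y₀ = x₀ K₀` and `Yᵢ = xᵢ Lᵢ` with `Lᵢ` of infinite index in `K₀`. By B. H. Neumann's
lemma one can pick `t₀, …, tₙ ∈ K₀` with no ratio `tⱼ⁻¹ tₖ` (`j ≠ k`) in any `Lᵢ`; then for every
`h ∈ Y₀` the `n + 1` points `h tⱼ` cannot all lie in `⋃ Yᵢ`, so `Y₀` is covered by the finitely many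
right translates `Y tⱼ⁻¹`. Affinity gives `α (h tⱼ) = α h · cⱼ` on `Y₀`, so the part of
`α⁻¹ C` in `Y₀` is the union of the translates of the compact sets `Y ∩ α⁻¹ (C cⱼ)`.
-/

open Pointwise

section Cosets

variable {G : Type*} [Group G]

theorem Subgroup.eq_of_leftCoset_eq {K K' : Subgroup G} {a b : G}
    (h : a • (K : Set G) = b • (K' : Set G)) : K = K' := by
  have hK : (K : Set G) = (a⁻¹ * b) • (K' : Set G) := by
    rw [mul_smul, ← h, inv_smul_smul]
  have hmem : a⁻¹ * b ∈ K' := by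
    have h1 : (1 : G) ∈ (a⁻¹ * b) • (K' : Set G) := hK ▸ K.one_mem
    simpa using K'.inv_mem ((mem_leftCoset_iff _).mp h1)
  exact SetLike.coe_injective (hK.trans (leftCoset_mem_leftCoset K' hmem))

theorem mul_mem_leftCoset_iff {K : Subgroup G} {x k : G} (hk : k ∈ K) (g : G) :
    g * k ∈ x • (K : Set G) ↔ g ∈ x • (K : Set G) := by
  simp only [mem_leftCoset_iff, SetLike.mem_coe, ← mul_assoc, K.mul_mem_cancel_right hk]

theorem exists_pairwise_inv_mul_notMem {ι : Type*} [Fintype ι] {L : ι → Subgroup G}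
    (hL : ∀ i, (L i).index = 0) (m : ℕ) :
    ∃ t : Fin m → G, Pairwise fun j k => ∀ i, (t j)⁻¹ * t k ∉ L i := by
  induction m with
  | zero => exact ⟨Fin.elim0, fun j => j.elim0⟩
  | succ m ih =>
    obtain ⟨t, ht⟩ := ih
    -- B. H. Neumann: finitely many cosets of infinite-index subgroups do not cover the group.
    have hU : ⋃ p ∈ (Finset.univ : Finset (Fin m × ι)), t p.1 • (L p.2 : Set G) ≠ Set.univ := by
      intro hcov
      obtain ⟨p, -, hp⟩ := Subgroup.exists_finiteIndex_of_leftCoset_cover hcov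
      exact hp.index_ne_zero (hL p.2)
    obtain ⟨a, ha⟩ := (Set.ne_univ_iff_exists_notMem _).mp hU
    simp only [Finset.mem_univ, Set.iUnion_true, Set.mem_iUnion, mem_leftCoset_iff,
      SetLike.mem_coe, Prod.exists, not_exists] at ha
    refine ⟨Fin.cons a t, ?_⟩
    intro j k hjk i
    rcases Fin.eq_zero_or_eq_succ j with rfl | ⟨j, rfl⟩ <;>
      rcases Fin.eq_zero_or_eq_succ k with rfl | ⟨k, rfl⟩
    · exact absurd rfl hjk
    · rw [← (L i).inv_mem_iff]
      simpa using ha k i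
    · simpa using ha j i
    · simpa using ht (ne_of_apply_ne Fin.succ hjk) i

theorem exists_forall_exists_mul_notMem_iUnion {ι : Type*} [Fintype ι] (K : Subgroup G)
    {L : ι → Subgroup G} (hL : ∀ i, ((L i).subgroupOf K).index = 0) (x : ι → G) :
    ∃ t : Fin (Fintype.card ι + 1) → K, ∀ g : G, ∃ j, g * t j ∉ ⋃ i, x i • (L i : Set G) := by
  obtain ⟨t, ht⟩ := exists_pairwise_inv_mul_notMem hL (Fintype.card ι + 1)
  refine ⟨t, fun g => ?_⟩
  -- otherwise two of the translates `g * t j` lie in the same coset `x i • L i`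
  by_contra! hcov
  simp only [Set.mem_iUnion] at hcov
  choose f hf using hcov
  obtain ⟨j, k, hjk, hf_eq⟩ := Fintype.exists_ne_map_eq_of_card_lt f (by simp)
  have hj := (mem_leftCoset_iff _).mp (hf j)
  have hk := (mem_leftCoset_iff _).mp (hf_eq ▸ hf k)
  apply ht hjk (f j)
  rw [Subgroup.mem_subgroupOf]
  simpa [mul_assoc] using (L (f j)).mul_mem ((L (f j)).inv_mem hj) hk

end Cosets

section Affine

variable {H G : Type*} [Group H] [Group G] {K : Subgroup H} {x₀ : H} {α : H → G}

theorem map_mul_of_affineOn_leftCoset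
    (haff : ∀ x ∈ x₀ • (K : Set H), ∀ y ∈ x₀ • (K : Set H), ∀ z ∈ x₀ • (K : Set H),
      α (x * y⁻¹ * z) = α x * (α y)⁻¹ * α z)
    {h k : H} (hh : h ∈ x₀ • (K : Set H)) (hk : k ∈ K) :
    α (h * k) = α h * ((α x₀)⁻¹ * α (x₀ * k)) := by
  have hx₀ : x₀ ∈ x₀ • (K : Set H) := mem_own_leftCoset K.toSubmonoid x₀
  have hx₀k : x₀ * k ∈ x₀ • (K : Set H) := mem_leftCoset x₀ hk
  simpa [mul_assoc] using haff h hh x₀ hx₀ (x₀ * k) hx₀k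

theorem isCompact_setOf_leftCoset_of_cover [TopologicalSpace H] [ContinuousMul H]
    [TopologicalSpace G] [ContinuousMul G]
    (haff : ∀ x ∈ x₀ • (K : Set H), ∀ y ∈ x₀ • (K : Set H), ∀ z ∈ x₀ • (K : Set H),
      α (x * y⁻¹ * z) = α x * (α y)⁻¹ * α z)
    {Y : Set H} (hY : Y ⊆ x₀ • (K : Set H)) {ι : Type*} [Finite ι] (t : ι → K)
    (hcover : ∀ h ∈ x₀ • (K : Set H), ∃ j, h * t j ∈ Y)
    (hprop : ∀ C : Set G, IsCompact C → IsCompact {h ∈ Y | α h ∈ C})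
    {C : Set G} (hC : IsCompact C) : IsCompact {h ∈ x₀ • (K : Set H) | α h ∈ C} := by
  set c : ι → G := fun j => (α x₀)⁻¹ * α (x₀ * t j)
  have hset : {h ∈ x₀ • (K : Set H) | α h ∈ C} = ⋃ j, Homeomorph.mulRight (t j : H) ⁻¹'
      {h ∈ Y | α h ∈ Homeomorph.mulRight (c j)⁻¹ ⁻¹' C} := by
    ext h
    simp only [Set.mem_iUnion, Set.mem_preimage, Homeomorph.coe_mulRight]
    constructor
    · rintro ⟨hh, hαh⟩
      obtain ⟨j, hj⟩ := hcover h hh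
      refine ⟨j, hj, ?_⟩
      rwa [map_mul_of_affineOn_leftCoset haff hh (t j).2, mul_inv_cancel_right]
    · rintro ⟨j, hj, hαj⟩
      have hh := (mul_mem_leftCoset_iff (t j).2 h).mp (hY hj)
      rw [map_mul_of_affineOn_leftCoset haff hh (t j).2, mul_inv_cancel_right] at hαj
      exact ⟨hh, hαj⟩
  rw [hset]
  exact isCompact_iUnion fun j => (Homeomorph.mulRight _).isCompact_preimage.mpr
    (hprop _ ((Homeomorph.mulRight _).isCompact_preimage.mpr hC))

end Affine

theorem stmt11_general {H G : Type*} [Group H] [TopologicalSpace H] [IsTopologicalGroup H]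
    [Group G] [TopologicalSpace G] [IsTopologicalGroup G]
    (Y₀ : Set H) (hY₀ : IsOpenCoset Y₀)
    (n : ℕ) (Yi : Fin n → Set H) (hYi : ∀ i, IsOpenSubcosetInfIndex (Yi i) Y₀)
    (Y : Set H) (hY : Y = Y₀ \ ⋃ i, Yi i)
    (α : H → G)
    (haff : ∀ x ∈ Y₀, ∀ y ∈ Y₀, ∀ z ∈ Y₀, α (x * y⁻¹ * z) = α x * (α y)⁻¹ * α z)
    (hprop : ∀ K : Set G, IsCompact K → IsCompact {h ∈ Y | α h ∈ K}) :
    ∀ K : Set G, IsCompact K → IsCompact {h ∈ Y₀ | α h ∈ K} := by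
  obtain ⟨K₀, x₀, -, hY₀⟩ := hY₀
  choose K L y x _ _ hY₀K hYiL _ hindex using hYi
  have hK : ∀ i, K i = K₀ := fun i => Subgroup.eq_of_leftCoset_eq ((hY₀K i).symm.trans hY₀)
  obtain ⟨t, ht⟩ := exists_forall_exists_mul_notMem_iUnion K₀ (fun i => hK i ▸ hindex i) x
  subst hY₀ hY
  intro C hC
  refine isCompact_setOf_leftCoset_of_cover haff Set.sdiff_subset t (fun h hh => ?_) hprop hC
  obtain ⟨j, hj⟩ := ht h
  exact ⟨j, (mul_mem_leftCoset_iff (t j).2 h).mpr hh, by simp only [hYiL]; exact hj⟩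

/-- If `Y = Y₀ \ ⋃ᵢ Yᵢ` is a nonempty member of the open coset
ring (`Aff(Y) = Y₀`) and `α : Aff(Y) → G` is affine with `α|_Y` proper, then
`α` is proper on `Aff(Y)`. -/
theorem stmt11 {H G : Type*} [Group H] [TopologicalSpace H] [IsTopologicalGroup H]
    [LocallyCompactSpace H] [T2Space H]
    [Group G] [TopologicalSpace G] [IsTopologicalGroup G]
    [LocallyCompactSpace G] [T2Space G]
    (Y₀ : Set H) (hY₀ : IsOpenCoset Y₀)
    (n : ℕ) (Yi : Fin n → Set H) (hYi : ∀ i, IsOpenSubcosetInfIndex (Yi i) Y₀)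
    (Y : Set H) (hY : Y = Y₀ \ ⋃ i, Yi i) (hYne : Y.Nonempty)
    (α : H → G)
    (haff : ∀ x ∈ Y₀, ∀ y ∈ Y₀, ∀ z ∈ Y₀, α (x * y⁻¹ * z) = α x * (α y)⁻¹ * α z)
    (hprop : ∀ K : Set G, IsCompact K → IsCompact {h ∈ Y | α h ∈ K}) :
    ∀ K : Set G, IsCompact K → IsCompact {h ∈ Y₀ | α h ∈ K} :=
  stmt11_general Y₀ hY₀ n Yi hYi Y hY α haff hprop
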